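/- arXiv:0910.1824 — 5 statements merged into one kernel-verified Lean document; each statement's English description precedes it below -/
import Mathlib

section
/- Let G be a finite graph with vertex set X, let {μ_x}_{x∈X} be nonnegative reals, and define R*_x = μ_x/φ*_x(μ), R̄_x = 1 - (1/(1+μ_x))^{1/φ̃*_x(μ)}, R̃*_x = μ_x/((1+μ_x)·φ̃*_x(μ)), and R_x = μ_x/Π_{y∈Γ*_G(x)}(1+μ_y). Then R*_x ≥ R̄_x ≥ R̃*_x ≥ R_x for every x ∈ X. -/
/-!
Splitting off the independent sets through `x` gives `φ*_x = φ̃*_x + μ_x`, and Bernoulli's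
inequality `(1 + s)^p ≤ 1 + p s` for `p = 1/φ̃*_x ∈ (0, 1]`, applied once with `s = μ_x` and once
with `s = -μ_x/(1+μ_x)`, yields the first two inequalities. The last one holds because
`φ̃*_x` is a partial sum of the expansion `∏_{y ∈ Γ(x)} (1 + μ_y) = ∑_{R ⊆ Γ(x)} ∏_{y ∈ R} μ_y`.
-/

open Finset
open scoped Classical BigOperators

/-- φ*_x(μ): sum over independent subsets of the closed neighborhood of x. -/
noncomputable def phiStar {X : Type*} [Fintype X] [DecidableEq X] (G : SimpleGraph X)
    (μ : X → ℝ) (x : X) : ℝ :=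
  ∑ R ∈ ((insert x (G.neighborFinset x)).powerset.filter
      (fun R => ∀ a ∈ R, ∀ b ∈ R, ¬ G.Adj a b)), ∏ y ∈ R, μ y

/-- φ̃*_x(μ): sum over independent subsets of the open neighborhood of x. -/
noncomputable def phiTilde {X : Type*} [Fintype X] [DecidableEq X] (G : SimpleGraph X)
    (μ : X → ℝ) (x : X) : ℝ :=
  ∑ R ∈ ((G.neighborFinset x).powerset.filter
      (fun R => ∀ a ∈ R, ∀ b ∈ R, ¬ G.Adj a b)), ∏ y ∈ R, μ y

section Bernoulli

variable {m t : ℝ}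

lemma one_sub_one_div_rpow_le_div (hm : -1 < m) (ht : 1 ≤ t) :
    1 - (1 / (1 + m)) ^ (1 / t) ≤ m / (t + m) := by
  have hm1 : 0 < 1 + m := by linarith
  have ht0 : 0 < t := by linarith
  have htm : 0 < t + m := by linarith
  have hbern : (1 + m) ^ (1 / t) ≤ (t + m) / t := by
    calc (1 + m) ^ (1 / t) ≤ 1 + 1 / t * m :=
          rpow_one_add_le_one_add_mul_self hm.le (one_div_pos.2 ht0).le
            (div_le_one_of_le₀ ht ht0.le)
      _ = (t + m) / t := by field_simp
  have hinv : t / (t + m) ≤ (1 / (1 + m)) ^ (1 / t) := by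
    rw [one_div (1 + m), Real.inv_rpow hm1.le, ← inv_div]
    exact inv_anti₀ (Real.rpow_pos_of_pos hm1 _) hbern
  have hsplit : m / (t + m) = 1 - t / (t + m) := by field_simp; ring
  linarith

lemma div_mul_le_one_sub_one_div_rpow (hm : -1 < m) (ht : 1 ≤ t) :
    m / ((1 + m) * t) ≤ 1 - (1 / (1 + m)) ^ (1 / t) := by
  have hm1 : 0 < 1 + m := by linarith
  have ht0 : 0 < t := by linarith
  have hs : -1 ≤ -(m / (1 + m)) := by
    rw [neg_le_neg_iff, div_le_one hm1]; linarith
  have hbern := rpow_one_add_le_one_add_mul_self hs (p := 1 / t) (one_div_pos.2 ht0).le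
    (div_le_one_of_le₀ ht ht0.le)
  have hbase : 1 + -(m / (1 + m)) = 1 / (1 + m) := by field_simp; ring
  have hprod : 1 / t * -(m / (1 + m)) = -(m / ((1 + m) * t)) := by field_simp
  rw [hbase, hprod] at hbern
  linarith

end Bernoulli

namespace SimpleGraph

variable {X : Type*} [Fintype X] [DecidableEq X] (G : SimpleGraph X) (μ : X → ℝ) (x : X)

lemma one_le_phiTilde (hμ : ∀ y, 0 ≤ μ y) : 1 ≤ phiTilde G μ x := by
  have hempty : (∅ : Finset X) ∈ (G.neighborFinset x).powerset.filter
      (fun R => ∀ a ∈ R, ∀ b ∈ R, ¬ G.Adj a b) := by simp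
  simpa [phiTilde] using single_le_sum (f := fun R => ∏ y ∈ R, μ y)
    (fun R _ => prod_nonneg fun y _ => hμ y) hempty

/-- An independent set containing `x` inside the closed neighbourhood of `x` is `{x}` itself. -/
lemma phiStar_eq_phiTilde_add : phiStar G μ x = phiTilde G μ x + μ x := by
  rw [phiStar, phiTilde, sum_filter, sum_filter,
    sum_powerset_insert (G.notMem_neighborFinset_self x), add_right_inj, sum_eq_single_of_mem ∅ (empty_mem_powerset _)]
  · simp
  · intro R hR hRne
    obtain ⟨y, hy⟩ := nonempty_iff_ne_empty.2 hRne
    have hxy : G.Adj x y := (mem_neighborFinset G x y).1 (mem_powerset.1 hR hy)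
    rw [if_neg]
    push Not
    exact ⟨x, mem_insert_self x R, y, mem_insert_of_mem hy, hxy⟩

lemma phiTilde_le_prod_one_add (hμ : ∀ y, 0 ≤ μ y) :
    phiTilde G μ x ≤ ∏ y ∈ G.neighborFinset x, (1 + μ y) := by
  rw [prod_one_add, phiTilde]
  exact sum_le_sum_of_subset_of_nonneg (filter_subset _ _)
    fun R _ _ => prod_nonneg fun y _ => hμ y

end SimpleGraph

theorem radii_chain {X : Type*} [Fintype X] [DecidableEq X] (G : SimpleGraph X)
    (μ : X → ℝ) (hμ : ∀ x, 0 ≤ μ x) (x : X) :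
    let Rstar := μ x / phiStar G μ x
    let Rbar := 1 - (1 / (1 + μ x)) ^ ((1 : ℝ) / phiTilde G μ x)
    let Rtilde := μ x / ((1 + μ x) * phiTilde G μ x)
    let Rlov := μ x / ∏ y ∈ insert x (G.neighborFinset x), (1 + μ y)
    Rbar ≤ Rstar ∧ Rtilde ≤ Rbar ∧ Rlov ≤ Rtilde := by
  intro Rstar Rbar Rtilde Rlov
  have ht : 1 ≤ phiTilde G μ x := G.one_le_phiTilde μ x hμ
  have hm : -1 < μ x := by linarith [hμ x]
  refine ⟨?_, div_mul_le_one_sub_one_div_rpow hm ht, ?_⟩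
  · simpa only [Rstar, G.phiStar_eq_phiTilde_add] using one_sub_one_div_rpow_le_div hm ht
  · change μ x / ∏ y ∈ insert x (G.neighborFinset x), (1 + μ y) ≤ Rtilde
    rw [prod_insert (G.notMem_neighborFinset_self x)]
    exact div_le_div_of_nonneg_left (hμ x) (mul_pos (by linarith) (by linarith))
      (mul_le_mul_of_nonneg_left (G.phiTilde_le_prod_one_add μ x hμ) (by linarith))
end

section
/- Let G be a finite graph with vertex set X, {p_x}_{x∈X} probabilities, and S ⊆ X. Define P(S) = Σ_{U: S ⊆ U ⊆ X, U independent in G} (-1)^{|U|-|S|} Π_{x∈U} p_x. If S itself is independent in G, then P(S) = Z_G(-p_S) · Π_{y∈S} p_y, where p^S_x = 0 if x ∈ S ∪ Γ_G(S) and p^S_x = p_x otherwise, and Z_G(w) = Σ_{R ⊆ X, R independent} Π_{x∈R} w_x. -/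
open Finset
open scoped Classical BigOperators

/-- Hard-core partition function with real weights. -/
noncomputable def hardCoreZ {X : Type*} [Fintype X] [DecidableEq X] (G : SimpleGraph X)
    (w : X → ℝ) : ℝ :=
  ∑ R ∈ (Finset.univ : Finset (Finset X)).filter
      (fun R => ∀ a ∈ R, ∀ b ∈ R, ¬ G.Adj a b), ∏ x ∈ R, w x

/-- Shearer's quantity P(S). -/
noncomputable def shearerP {X : Type*} [Fintype X] [DecidableEq X] (G : SimpleGraph X)
    (p : X → ℝ) (S : Finset X) : ℝ :=
  ∑ U ∈ (Finset.univ : Finset (Finset X)).filter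
      (fun U => S ⊆ U ∧ ∀ a ∈ U, ∀ b ∈ U, ¬ G.Adj a b),
    (-1 : ℝ) ^ (U.card - S.card) * ∏ x ∈ U, p x

/-! Removing `S` from an independent set `U ⊇ S` leaves an independent set that avoids `S` and
its neighbourhood, and conversely, when `S` is independent, adjoining `S` to such a set gives an
independent superset of `S`. Under this bijection the sign `(-1)^(|U| - |S|)` is absorbed into
the weights `-p_x` on `U \ S`, while the weight `0` on `S ∪ Γ(S)` kills every other term of
`Z_G(-p_S)`. -/

section

variable {X : Type*} [DecidableEq X] (G : SimpleGraph X)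

theorem hardCoreZ_eq_sum_of_eq_zero [Fintype X] (w : X → ℝ) (Q : X → Prop)
    (hw : ∀ x, Q x → w x = 0) :
    hardCoreZ G w =
      ∑ R ∈ (univ : Finset (Finset X)).filter
        (fun R => (∀ a ∈ R, ∀ b ∈ R, ¬ G.Adj a b) ∧ ∀ x ∈ R, ¬ Q x), ∏ x ∈ R, w x := by
  refine (sum_subset (fun R hR => ?_) fun R hR hR' => ?_).symm
  · simp only [mem_filter] at hR ⊢
    exact ⟨hR.1, hR.2.1⟩
  · simp only [mem_filter, mem_univ, true_and, not_and, not_forall, not_not] at hR hR'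
    obtain ⟨x, hx, hQx⟩ := hR' hR
    exact prod_eq_zero hx (hw x hQx)

variable {G}

theorem notMem_closedNbhd_of_mem_sdiff {S U : Finset X} (hSU : S ⊆ U)
    (hU : ∀ a ∈ U, ∀ b ∈ U, ¬ G.Adj a b) :
    ∀ x ∈ U \ S, ¬ (x ∈ S ∨ ∃ y ∈ S, G.Adj x y) := by
  intro x hx
  obtain ⟨hxU, hxS⟩ := mem_sdiff.mp hx
  rintro (hxS' | ⟨y, hy, hxy⟩)
  · exact hxS hxS'
  · exact hU x hxU y (hSU hy) hxy

theorem union_indep_of_notMem_closedNbhd {S R : Finset X}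
    (hS : ∀ a ∈ S, ∀ b ∈ S, ¬ G.Adj a b) (hR : ∀ a ∈ R, ∀ b ∈ R, ¬ G.Adj a b)
    (hRS : ∀ x ∈ R, ¬ (x ∈ S ∨ ∃ y ∈ S, G.Adj x y)) :
    ∀ a ∈ S ∪ R, ∀ b ∈ S ∪ R, ¬ G.Adj a b := by
  intro a ha b hb hab
  rcases mem_union.mp ha with haS | haR <;> rcases mem_union.mp hb with hbS | hbR
  · exact hS a haS b hbS hab
  · exact hRS b hbR (Or.inr ⟨a, haS, hab.symm⟩)
  · exact hRS a haR (Or.inr ⟨b, hbS, hab⟩)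
  · exact hR a haR b hbR hab

theorem neg_one_pow_card_sub_mul_prod {S U : Finset X}
    (hSU : S ⊆ U) (p : X → ℝ) :
    (-1 : ℝ) ^ (U.card - S.card) * ∏ x ∈ U, p x = (∏ x ∈ U \ S, -p x) * ∏ y ∈ S, p y := by
  rw [← card_sdiff_of_subset hSU, ← prod_sdiff hSU, ← mul_assoc, ← prod_const, ← prod_mul_distrib]
  simp only [neg_one_mul]

end

theorem shearerP_eq_Z_general {X : Type*} [Fintype X] [DecidableEq X] (G : SimpleGraph X)
    (p : X → ℝ) (S : Finset X)
    (hS : ∀ a ∈ S, ∀ b ∈ S, ¬ G.Adj a b) :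
    shearerP G p S =
      hardCoreZ G (fun x =>
        if x ∈ S ∨ ∃ y ∈ S, G.Adj x y then 0 else -(p x)) * ∏ y ∈ S, p y := by
  rw [hardCoreZ_eq_sum_of_eq_zero G _ _ fun x hx => if_pos hx, shearerP, sum_mul]
  refine sum_nbij' (· \ S) (S ∪ ·) (fun U hU => ?_) (fun R hR => ?_) (fun U hU => ?_)
    (fun R hR => ?_) (fun U hU => ?_) <;>
    simp only [mem_filter, mem_univ, true_and] at *
  · exact ⟨fun a ha b hb => hU.2 a (sdiff_subset ha) b (sdiff_subset hb),
      notMem_closedNbhd_of_mem_sdiff hU.1 hU.2⟩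
  · exact ⟨subset_union_left, union_indep_of_notMem_closedNbhd hS hR.1 hR.2⟩
  · exact union_sdiff_of_subset hU.1
  · exact union_sdiff_cancel_left (disjoint_right.mpr fun x hx hxS => hR.2 x hx (Or.inl hxS))
  · rw [neg_one_pow_card_sub_mul_prod hU.1, prod_congr rfl fun x hx =>
      if_neg (notMem_closedNbhd_of_mem_sdiff hU.1 hU.2 x hx)]

theorem shearerP_eq_Z {X : Type*} [Fintype X] [DecidableEq X] (G : SimpleGraph X)
    (p : X → ℝ) (hp : ∀ x, 0 ≤ p x ∧ p x ≤ 1) (S : Finset X)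
    (hS : ∀ a ∈ S, ∀ b ∈ S, ¬ G.Adj a b) :
    shearerP G p S =
      hardCoreZ G (fun x =>
        if x ∈ S ∨ ∃ y ∈ S, G.Adj x y then 0 else -(p x)) * ∏ y ∈ S, p y :=
  shearerP_eq_Z_general G p S hS
end

section
/- (Shearer) Let {A_x}_{x∈X} be events with dependency graph G and P(A_x) = p_x. Define for S ⊆ X, P(S) = Σ_{U: S ⊆ U ⊆ X, U independent in G} (-1)^{|U|-|S|} Π_{x∈U} p_x. If P(S) ≥ 0 for all S ⊆ X, then P(∩_{x∈X} Ā_x) ≥ P(∅) = Σ_{U ⊆ X, U independent} (-1)^{|U|} Π_{x∈U} p_x. -/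
open Finset MeasureTheory
open scoped Classical BigOperators

/-!
Let `q W` be the independence polynomial of `G[W]` at `-p` and `r W` the probability that no
`A y` with `y ∈ W` occurs. Removing a vertex `x ∈ Z` gives
`q Z = q (Z - x) - p x * q (Z - N[x])`, and since `A x` is independent of the event that no
`A y` with `y ∉ N[x]` occurs, also `r Z ≥ r (Z - x) - p x * r (Z - N[x])`.
Summing `P S` over the `S` disjoint from `W` gives `q W`, so the hypothesis makes `q`
nonnegative, and an induction on `Z` comparing the two recurrences yields
`q Z * r W ≤ q W * r Z` for `W ⊆ Z`. For `W = ∅`, `Z = X` this is `P ∅ = q X ≤ r X`.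
-/

lemma neg_one_pow_sub_of_le {M : Type*} [Monoid M] [HasDistribNeg M] {a b : ℕ} (h : b ≤ a) :
    (-1 : M) ^ (a - b) = (-1) ^ a * (-1) ^ b := by
  rw [← pow_add, show a + b = a - b + 2 * b by omega, pow_add, pow_mul, neg_one_sq, one_pow,
    mul_one]

lemma Finset.sum_powerset_neg_one_pow_card_eq_ite {R α : Type*} [Ring R] [DecidableEq α]
    (s : Finset α) : ∑ t ∈ s.powerset, (-1 : R) ^ t.card = if s = ∅ then 1 else 0 := by
  exact_mod_cast congrArg (Int.cast : ℤ → R) (sum_powerset_neg_one_pow_card (x := s))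

namespace SimpleGraph

variable {X R : Type*} (G : SimpleGraph X)

lemma isIndepSet_coe_iff {U : Finset X} :
    G.IsIndepSet (U : Set X) ↔ ∀ a ∈ U, ∀ b ∈ U, ¬ G.Adj a b :=
  ⟨fun h _ ha _ hb hab => h ha hb hab.ne hab, fun h a ha b hb _ => h a ha b hb⟩

lemma isIndepSet_insert_of_notMem {U : Set X} {x : X} (hx : x ∉ U) :
    G.IsIndepSet (insert x U) ↔ G.IsIndepSet U ∧ ∀ b ∈ U, ¬ G.Adj x b := by
  simp only [isIndepSet_iff, Set.pairwise_insert_of_notMem hx, G.adj_comm _ x, and_self]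

/-- The multivariate independence polynomial of `G[W]`, evaluated at `-p`. -/
noncomputable def negIndepPoly [DecidableEq X] [CommRing R] (p : X → R) (W : Finset X) : R :=
  ∑ U ∈ W.powerset.filter (fun U : Finset X => G.IsIndepSet (U : Set X)),
    (-1) ^ U.card * ∏ x ∈ U, p x

variable {G} [DecidableEq X] [CommRing R] (p : X → R)

lemma negIndepPoly_eq_sum_ite (W : Finset X) :
    G.negIndepPoly p W = ∑ U ∈ W.powerset,
      if G.IsIndepSet (U : Set X) then (-1) ^ U.card * ∏ x ∈ U, p x else 0 :=
  sum_filter _ _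

@[simp]
lemma negIndepPoly_empty : G.negIndepPoly p ∅ = 1 := by
  simp [negIndepPoly_eq_sum_ite]

lemma negIndepPoly_eq_erase_sub [Fintype X] {Z : Finset X} {x : X} (hx : x ∈ Z) :
    G.negIndepPoly p Z = G.negIndepPoly p (Z.erase x)
      - p x * G.negIndepPoly p (Z \ insert x (G.neighborFinset x)) := by
  set f : Finset X → R := fun U =>
    if G.IsIndepSet (U : Set X) then (-1) ^ U.card * ∏ x ∈ U, p x else 0
  set Y := Z \ insert x (G.neighborFinset x)
  have hY : Y ⊆ Z.erase x :=
    subset_erase.2 ⟨sdiff_subset, fun h => (mem_sdiff.1 h).2 (mem_insert_self x _)⟩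
  have hinsert : ∀ t ∈ (Z.erase x).powerset,
      f (insert x t) = if t ∈ Y.powerset then -(p x * f t) else 0 := by
    intro t ht
    rw [mem_powerset] at ht
    have hxt : x ∉ t := fun h => notMem_erase x Z (ht h)
    have hmem : t ∈ Y.powerset ↔ ∀ b ∈ t, ¬ G.Adj x b := by
      rw [mem_powerset, subset_sdiff, disjoint_insert_right, and_iff_right hxt,
        and_iff_right (ht.trans (erase_subset x Z)), Finset.disjoint_left]
      simp only [mem_neighborFinset]
    have hindep := isIndepSet_insert_of_notMem G (mem_coe.not.2 hxt)
    by_cases hadj : ∀ b ∈ t, ¬ G.Adj x b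
    · simp only [f, if_pos (hmem.2 hadj), coe_insert, hindep, mem_coe, and_iff_left hadj,
        card_insert_of_notMem hxt, prod_insert hxt]
      split_ifs <;> ring
    · simp [f, hmem, hadj, hindep]
  calc G.negIndepPoly p Z
      = ∑ t ∈ (insert x (Z.erase x)).powerset, f t := by
        rw [insert_erase hx]; exact negIndepPoly_eq_sum_ite p Z
    _ = G.negIndepPoly p (Z.erase x) + ∑ t ∈ (Z.erase x).powerset, f (insert x t) := by
        rw [sum_powerset_insert (notMem_erase x Z), negIndepPoly_eq_sum_ite]
    _ = G.negIndepPoly p (Z.erase x) - p x * G.negIndepPoly p Y := by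
        rw [sum_congr rfl hinsert, sum_ite_mem, inter_eq_right.2 (powerset_mono.2 hY),
          sum_neg_distrib, ← mul_sum, negIndepPoly_eq_sum_ite p Y, sub_eq_add_neg]

end SimpleGraph

section Shearer

variable {X : Type*} [Fintype X] [DecidableEq X] {G : SimpleGraph X} {p : X → ℝ}

lemma sum_shearerP_disjoint (W : Finset X) :
    ∑ S ∈ univ.filter (fun S => Disjoint S W), shearerP G p S = G.negIndepPoly p W := by
  set I : Finset X → Prop := fun U => ∀ a ∈ U, ∀ b ∈ U, ¬ G.Adj a b
  have hinner : ∀ U : Finset X,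
      ∑ S ∈ (univ.filter (fun S => Disjoint S W)).filter (· ⊆ U),
        (-1 : ℝ) ^ (U.card - S.card) * ∏ x ∈ U, p x
      = if U ⊆ W then (-1) ^ U.card * ∏ x ∈ U, p x else 0 := by
    intro U
    have hfilter : (univ.filter (fun S => Disjoint S W)).filter (· ⊆ U) = (U \ W).powerset := by
      ext S; simp only [mem_filter, mem_univ, true_and, mem_powerset, subset_sdiff]; tauto
    have hsign : ∀ S ∈ (U \ W).powerset, (-1 : ℝ) ^ (U.card - S.card) * ∏ x ∈ U, p x
        = ((-1) ^ U.card * ∏ x ∈ U, p x) * (-1) ^ S.card := fun S hS => by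
      rw [neg_one_pow_sub_of_le (card_le_card ((mem_powerset.1 hS).trans sdiff_subset))]; ring
    rw [hfilter, sum_congr rfl hsign, ← mul_sum, sum_powerset_neg_one_pow_card_eq_ite]
    simp only [sdiff_eq_empty_iff_subset, mul_ite, mul_one, mul_zero]
  have hfilter_indep : (univ.filter I).filter (· ⊆ W)
      = W.powerset.filter (fun U : Finset X => G.IsIndepSet (U : Set X)) := by
    ext U
    simp only [mem_filter, mem_univ, true_and, mem_powerset, G.isIndepSet_coe_iff, I]
    tauto
  calc ∑ S ∈ univ.filter (fun S => Disjoint S W), shearerP G p S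
      = ∑ U ∈ univ.filter I, ∑ S ∈ (univ.filter (fun S => Disjoint S W)).filter (· ⊆ U),
          (-1 : ℝ) ^ (U.card - S.card) * ∏ x ∈ U, p x := by
        refine sum_comm' fun S U => ?_
        simp only [mem_filter, mem_univ, true_and, I]
        tauto
    _ = G.negIndepPoly p W := by
        rw [sum_congr rfl fun U _ => hinner U, ← sum_filter, hfilter_indep]
        rfl

lemma shearerP_empty : shearerP G p ∅ = G.negIndepPoly p univ := by
  have h : (univ : Finset (Finset X)).filter (fun S => Disjoint S univ) = {∅} := by
    ext S; simpa using (disjoint_top : Disjoint S ⊤ ↔ _)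
  rw [← sum_shearerP_disjoint, h, sum_singleton]

lemma SimpleGraph.negIndepPoly_nonneg (hpos : ∀ S, 0 ≤ shearerP G p S) (W : Finset X) :
    0 ≤ G.negIndepPoly p W := by
  rw [← sum_shearerP_disjoint]
  exact sum_nonneg fun S _ => hpos S

end Shearer

theorem mul_le_mul_of_subset_of_recurrence {X 𝕜 : Type*} [DecidableEq X] [CommRing 𝕜]
    [LinearOrder 𝕜] [IsStrictOrderedRing 𝕜] {N : X → Finset X} (hN : ∀ x, x ∈ N x)
    {p : X → 𝕜} {q r : Finset X → 𝕜} (hp : ∀ x, 0 ≤ p x) (hq : ∀ W, 0 ≤ q W)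
    (hr : ∀ W, 0 ≤ r W)
    (hq_rec : ∀ Z x, x ∈ Z → q Z = q (Z.erase x) - p x * q (Z \ N x))
    (hr_rec : ∀ Z x, x ∈ Z → r (Z.erase x) - p x * r (Z \ N x) ≤ r Z) :
    ∀ Z, ∀ W ⊆ Z, q Z * r W ≤ q W * r Z := by
  intro Z
  induction Z using Finset.strongInduction with
  | H Z ih =>
  intro W hWZ
  obtain rfl | hWZ' := eq_or_ssubset_of_subset hWZ
  · rfl
  obtain ⟨x, hxZ, hxW⟩ := exists_of_ssubset hWZ'
  have ih_nbhd := ih _ (erase_ssubset hxZ) (Z \ N x)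
    (subset_erase.2 ⟨sdiff_subset, fun h => (mem_sdiff.1 h).2 (hN x)⟩)
  have ih_W := ih _ (erase_ssubset hxZ) W (subset_erase.2 ⟨hWZ, hxW⟩)
  have hstep : q Z * r (Z.erase x) ≤ q (Z.erase x) * r Z := by
    rw [hq_rec Z x hxZ]
    linear_combination mul_le_mul_of_nonneg_left ih_nbhd (hp x)
      + mul_le_mul_of_nonneg_left (hr_rec Z x hxZ) (hq (Z.erase x))
  -- chain `W ⊆ Z.erase x ⊆ Z` and cancel `q (Z.erase x)`, which vanishes only if `q Z` does
  rcases (hq (Z.erase x)).eq_or_lt with h0 | hpos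
  · have hqZ : q Z = 0 := by
      refine le_antisymm ?_ (hq Z)
      linarith [hq_rec Z x hxZ, mul_nonneg (hp x) (hq (Z \ N x))]
    rw [hqZ, zero_mul]
    exact mul_nonneg (hq W) (hr Z)
  · refine le_of_mul_le_mul_left ?_ hpos
    linear_combination mul_le_mul_of_nonneg_left ih_W (hq Z)
      + mul_le_mul_of_nonneg_left hstep (hq W)

section Probability

open ProbabilityTheory

variable {Ω X : Type*} [MeasurableSpace Ω] {ν : Measure Ω} [IsFiniteMeasure ν]

lemma measureReal_sub_mul_le_measureReal_sdiff {B C D : Set Ω} (hD : MeasurableSet D)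
    (hBC : B ⊆ C) (hDC : IndepSet D C ν) :
    ν.real B - ν.real D * ν.real C ≤ ν.real (B \ D) := by
  have hinter : ν.real (B ∩ D) ≤ ν.real D * ν.real C := by
    calc ν.real (B ∩ D) ≤ ν.real (D ∩ C) :=
          measureReal_mono fun ω hω => ⟨hω.2, hBC hω.1⟩
      _ = ν.real D * ν.real C := by
        simp only [measureReal_def, hDC.measure_inter_eq_mul, ENNReal.toReal_mul]
  linarith [measureReal_inter_add_sdiff (μ := ν) (s := B) hD]

lemma measureReal_biInter_compl_erase_sub_le [DecidableEq X] {A : X → Set Ω} {x : X}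
    {N Z : Finset X} (hxN : x ∈ N) (hxZ : x ∈ Z) (hAx : MeasurableSet (A x))
    (hdep : Indep (MeasurableSpace.generateFrom {A x})
      (MeasurableSpace.generateFrom {s | ∃ y, y ∉ N ∧ s = A y}) ν) :
    ν.real (⋂ y ∈ Z.erase x, (A y)ᶜ) - ν.real (A x) * ν.real (⋂ y ∈ Z \ N, (A y)ᶜ)
      ≤ ν.real (⋂ y ∈ Z, (A y)ᶜ) := by
  have hsub : Z \ N ⊆ Z.erase x :=
    subset_erase.2 ⟨sdiff_subset, fun h => (mem_sdiff.1 h).2 hxN⟩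
  have hindep : IndepSet (A x) (⋂ y ∈ Z \ N, (A y)ᶜ) ν := by
    refine hdep.indepSet_of_measurableSet (MeasurableSpace.measurableSet_generateFrom rfl)
      (Finset.measurableSet_biInter _ fun y hy => .compl ?_)
    exact MeasurableSpace.measurableSet_generateFrom ⟨y, (mem_sdiff.1 hy).2, rfl⟩
  have hZ : ⋂ y ∈ Z, (A y)ᶜ = (⋂ y ∈ Z.erase x, (A y)ᶜ) \ A x := by
    conv_lhs => rw [← insert_erase hxZ, set_biInter_insert]
    rw [Set.inter_comm, Set.sdiff_eq]
  rw [hZ]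
  exact measureReal_sub_mul_le_measureReal_sdiff hAx
    (Set.biInter_subset_biInter_left (coe_subset.2 hsub)) hindep

end Probability

theorem shearer {Ω : Type*} [MeasurableSpace Ω] (ν : Measure Ω)
    [IsProbabilityMeasure ν]
    {X : Type*} [Fintype X] [DecidableEq X] (G : SimpleGraph X)
    (A : X → Set Ω) (hA : ∀ x, MeasurableSet (A x))
    (hdep : ∀ x : X, ProbabilityTheory.Indep
      (MeasurableSpace.generateFrom {A x})
      (MeasurableSpace.generateFrom {s | ∃ y, y ∉ insert x (G.neighborFinset x) ∧ s = A y}) ν)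
    (p : X → ℝ) (hp : ∀ x, (ν (A x)).toReal = p x)
    (hpos : ∀ S : Finset X, 0 ≤ shearerP G p S) :
    (ν (⋂ x, (A x)ᶜ)).toReal ≥ shearerP G p ∅ := by
  have hp_nonneg : ∀ x, 0 ≤ p x := fun x => hp x ▸ ENNReal.toReal_nonneg
  have key := mul_le_mul_of_subset_of_recurrence (N := fun x => insert x (G.neighborFinset x))
    (r := fun W => ν.real (⋂ y ∈ W, (A y)ᶜ)) (fun x => mem_insert_self x _) hp_nonneg
    (G.negIndepPoly_nonneg hpos) (fun _ => measureReal_nonneg)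
    (fun _ _ hx => G.negIndepPoly_eq_erase_sub p hx)
    (fun _ x hx => hp x ▸ measureReal_biInter_compl_erase_sub_le (mem_insert_self x _) hx (hA x)
      (hdep x))
    univ ∅ (empty_subset _)
  simpa [shearerP_empty, measureReal_def] using key
end

section
/- Let G = (V,E) be a finite graph with maximum degree Δ ≥ 1, and let V = V₁ ∪ … ∪ Vₙ be a partition of V into n pairwise disjoint sets, each of size at least 4Δ. Then there exists an independent set W ⊆ V of cardinality n containing exactly one vertex from each Vᵢ. -/
open Finset
open scoped Classical BigOperators

open Function

/-!
Let `N(A)` be the number of independent transversals of the classes indexed by `A`. By induction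
on `A`, every vertex of a class `V_j`, `j ∈ A`, lies in at most `N(A) / 2Δ` of them. Indeed, a
vertex `v ∈ V_j` added to a transversal of `A \ {j}` can only clash with it through one of its at
most `Δ` neighbours, each of which is used by at most `N(A \ {j}) / 2Δ` transversals; so at most
half of the `|V_j| N(A \ {j})` extensions fail and `N(A) ≥ |V_j| N(A \ {j}) / 2`. The
transversals of `A` through a fixed `u ∈ V_j` restrict injectively to `A \ {j}`, hence number at
most `N(A \ {j}) ≤ 2 N(A) / |V_j| ≤ N(A) / 2Δ` as `|V_j| ≥ 4Δ`. The same growth bound shows that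
`N` never vanishes.
-/

namespace SimpleGraph

lemma sum_card_filter_adj_le_degree {V ι : Type*} [Fintype V] [DecidableEq V]
    {G : SimpleGraph V} [DecidableRel G.Adj] {Vs : ι → Finset V}
    (hdisj : Pairwise (Disjoint on Vs)) (A : Finset ι) (v : V) :
    ∑ i ∈ A, #{u ∈ Vs i | G.Adj v u} ≤ G.degree v := by
  rw [← card_biUnion fun i _ k _ hik => disjoint_filter_filter (hdisj hik),
    ← card_neighborFinset_eq_degree]
  refine card_le_card fun u hu => ?_
  simp only [mem_biUnion, mem_filter] at hu
  obtain ⟨_, _, _, hu⟩ := hu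
  exact (mem_neighborFinset _ _ _).2 hu

variable {V ι : Type*} [Fintype V] [DecidableEq V] [Fintype ι] [DecidableEq ι]
  (G : SimpleGraph V) [DecidableRel G.Adj] (Vs : ι → Finset V) (d : ι → V)

/-- Independent transversals of the classes `Vs i`, `i ∈ A`, padded by `d` outside `A` so that
they can be counted as functions `ι → V`. -/
def indepTransversalsOn (A : Finset ι) : Finset (ι → V) :=
  {ω | (∀ i ∈ A, ω i ∈ Vs i) ∧ (∀ i ∉ A, ω i = d i) ∧ ∀ i ∈ A, ∀ j ∈ A, ¬ G.Adj (ω i) (ω j)}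

variable {G Vs d}

@[simp]
lemma mem_indepTransversalsOn {A : Finset ι} {ω : ι → V} :
    ω ∈ G.indepTransversalsOn Vs d A ↔
      (∀ i ∈ A, ω i ∈ Vs i) ∧ (∀ i ∉ A, ω i = d i) ∧ ∀ i ∈ A, ∀ j ∈ A, ¬ G.Adj (ω i) (ω j) := by
  simp [indepTransversalsOn]

lemma update_mem_indepTransversalsOn_insert {A : Finset ι} {j : ι} {ω : ι → V} {v : V}
    (hω : ω ∈ G.indepTransversalsOn Vs d A) (hv : v ∈ Vs j) (hvω : ∀ i ∈ A, ¬ G.Adj v (ω i)) :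
    update ω j v ∈ G.indepTransversalsOn Vs d (insert j A) := by
  simp only [mem_indepTransversalsOn] at hω ⊢
  grind [update_apply, SimpleGraph.adj_comm, SimpleGraph.irrefl]

lemma update_mem_indepTransversalsOn_erase {A : Finset ι} {j : ι} {ω : ι → V}
    (hω : ω ∈ G.indepTransversalsOn Vs d A) :
    update ω j (d j) ∈ G.indepTransversalsOn Vs d (A.erase j) := by
  simp only [mem_indepTransversalsOn] at hω ⊢
  grind [update_apply]

lemma sum_card_compatible_le_card_insert {A : Finset ι} {j : ι} (hj : j ∉ A) :
    ∑ v ∈ Vs j, #{ω ∈ G.indepTransversalsOn Vs d A | ∀ i ∈ A, ¬ G.Adj v (ω i)} ≤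
      #(G.indepTransversalsOn Vs d (insert j A)) := by
  rw [← card_sigma]
  refine card_le_card_of_injOn (fun p => update p.2 j p.1) ?_ ?_
  · rintro ⟨v, ω⟩ hp
    simp only [coe_sigma, Set.mem_sigma_iff, mem_coe, mem_filter] at hp
    exact update_mem_indepTransversalsOn_insert hp.2.1 hp.1 hp.2.2
  · rintro ⟨v, ω⟩ hp ⟨v', ω'⟩ hp' h
    simp only [coe_sigma, Set.mem_sigma_iff, mem_coe, mem_filter, mem_indepTransversalsOn] at hp hp'
    have hωj : ω j = ω' j := (hp.2.1.2.1 j hj).trans (hp'.2.1.2.1 j hj).symm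
    obtain ⟨rfl, rfl⟩ : v = v' ∧ ω = ω' := by
      refine ⟨by simpa using congrFun h j, funext fun i => ?_⟩
      by_cases hij : i = j
      · rwa [hij]
      · simpa [update_of_ne hij] using congrFun h i
    rfl

lemma card_filter_apply_eq_le_card_erase {A : Finset ι} (j : ι) (u : V) :
    #{ω ∈ G.indepTransversalsOn Vs d A | ω j = u} ≤ #(G.indepTransversalsOn Vs d (A.erase j)) := by
  refine card_le_card_of_injOn (fun ω => update ω j (d j)) (fun ω hω => ?_)
    (fun ω hω ω' hω' h => ?_)
  · exact update_mem_indepTransversalsOn_erase (mem_filter.1 hω).1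
  · simp only [coe_filter, Set.mem_ofPred_eq] at hω hω'
    rw [← update_eq_self j ω, ← update_eq_self j ω', hω.2, hω'.2]
    simpa using congrArg (update · j u) h

lemma card_filter_exists_adj_le (A : Finset ι) (v : V) :
    #{ω ∈ G.indepTransversalsOn Vs d A | ∃ i ∈ A, G.Adj v (ω i)} ≤
      ∑ i ∈ A, ∑ u ∈ Vs i with G.Adj v u, #{ω ∈ G.indepTransversalsOn Vs d A | ω i = u} := by
  refine (card_le_card fun ω hω => ?_).trans <| card_biUnion_le.trans <|
    sum_le_sum fun i _ => card_biUnion_le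
  simp only [mem_filter, mem_indepTransversalsOn] at hω
  obtain ⟨hω, i, hi, hadj⟩ := hω
  simp only [mem_biUnion, mem_filter, mem_indepTransversalsOn]
  exact ⟨i, hi, ω i, ⟨hω.1 i hi, hadj⟩, hω, rfl⟩

variable {Δ : ℕ}

lemma two_mul_card_filter_exists_adj_le (hdisj : Pairwise (Disjoint on Vs)) (hΔpos : 0 < Δ)
    (hΔ : G.maxDegree ≤ Δ) {A : Finset ι}
    (hfiber : ∀ i ∈ A, ∀ u, 2 * Δ * #{ω ∈ G.indepTransversalsOn Vs d A | ω i = u} ≤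
      #(G.indepTransversalsOn Vs d A)) (v : V) :
    2 * #{ω ∈ G.indepTransversalsOn Vs d A | ∃ i ∈ A, G.Adj v (ω i)} ≤
      #(G.indepTransversalsOn Vs d A) := by
  set N := #(G.indepTransversalsOn Vs d A)
  refine Nat.le_of_mul_le_mul_left ?_ hΔpos
  calc Δ * (2 * #{ω ∈ G.indepTransversalsOn Vs d A | ∃ i ∈ A, G.Adj v (ω i)})
      ≤ ∑ i ∈ A, ∑ u ∈ Vs i with G.Adj v u,
          2 * Δ * #{ω ∈ G.indepTransversalsOn Vs d A | ω i = u} := by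
        simp only [← mul_sum, ← mul_assoc, mul_comm Δ 2]
        exact Nat.mul_le_mul_left _ (card_filter_exists_adj_le A v)
    _ ≤ ∑ i ∈ A, ∑ u ∈ Vs i with G.Adj v u, N := by
        gcongr with i hi u; exact hfiber i hi u
    _ = (∑ i ∈ A, #{u ∈ Vs i | G.Adj v u}) * N := by simp [sum_mul]
    _ ≤ Δ * N := by
        gcongr
        exact (sum_card_filter_adj_le_degree hdisj A v).trans ((G.degree_le_maxDegree v).trans hΔ)

lemma card_mul_card_le_two_mul_card_insert (hdisj : Pairwise (Disjoint on Vs)) (hΔpos : 0 < Δ)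
    (hΔ : G.maxDegree ≤ Δ) {A : Finset ι} {j : ι} (hj : j ∉ A)
    (hfiber : ∀ i ∈ A, ∀ u, 2 * Δ * #{ω ∈ G.indepTransversalsOn Vs d A | ω i = u} ≤
      #(G.indepTransversalsOn Vs d A)) :
    #(Vs j) * #(G.indepTransversalsOn Vs d A) ≤ 2 * #(G.indepTransversalsOn Vs d (insert j A)) := by
  calc #(Vs j) * #(G.indepTransversalsOn Vs d A)
      = ∑ v ∈ Vs j, #(G.indepTransversalsOn Vs d A) := by simp
    _ ≤ ∑ v ∈ Vs j, 2 * #{ω ∈ G.indepTransversalsOn Vs d A | ∀ i ∈ A, ¬ G.Adj v (ω i)} := by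
        gcongr with v
        have hsplit := card_filter_add_card_filter_not (s := G.indepTransversalsOn Vs d A)
          fun ω => ∀ i ∈ A, ¬ G.Adj v (ω i)
        simp only [not_forall, not_not, exists_prop] at hsplit
        have := two_mul_card_filter_exists_adj_le hdisj hΔpos hΔ hfiber v
        omega
    _ ≤ 2 * #(G.indepTransversalsOn Vs d (insert j A)) := by
        rw [← mul_sum]
        exact Nat.mul_le_mul_left 2 (sum_card_compatible_le_card_insert hj)

lemma two_mul_card_filter_apply_eq_le (hdisj : Pairwise (Disjoint on Vs)) (hΔpos : 0 < Δ)
    (hΔ : G.maxDegree ≤ Δ) (hsize : ∀ i, 4 * Δ ≤ #(Vs i)) (A : Finset ι) :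
    ∀ j ∈ A, ∀ u, 2 * Δ * #{ω ∈ G.indepTransversalsOn Vs d A | ω j = u} ≤
      #(G.indepTransversalsOn Vs d A) := by
  induction A using Finset.strongInduction with
  | H A ih =>
    intro j hj u
    have hgrow := card_mul_card_le_two_mul_card_insert hdisj hΔpos hΔ (notMem_erase j A)
      (ih _ (erase_ssubset hj))
    rw [insert_erase hj] at hgrow
    calc 2 * Δ * #{ω ∈ G.indepTransversalsOn Vs d A | ω j = u}
        ≤ 2 * Δ * #(G.indepTransversalsOn Vs d (A.erase j)) :=
          Nat.mul_le_mul_left _ (card_filter_apply_eq_le_card_erase j u)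
      _ ≤ #(G.indepTransversalsOn Vs d A) := by nlinarith [hsize j]

lemma card_indepTransversalsOn_pos (hdisj : Pairwise (Disjoint on Vs)) (hΔpos : 0 < Δ)
    (hΔ : G.maxDegree ≤ Δ) (hsize : ∀ i, 4 * Δ ≤ #(Vs i)) (A : Finset ι) :
    0 < #(G.indepTransversalsOn Vs d A) := by
  induction A using Finset.induction_on with
  | empty => exact card_pos.2 ⟨d, by simp⟩
  | insert j A hj ih =>
    have hgrow := card_mul_card_le_two_mul_card_insert hdisj hΔpos hΔ hj
      (two_mul_card_filter_apply_eq_le (d := d) hdisj hΔpos hΔ hsize A)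
    nlinarith [hsize j]

theorem exists_indep_transversal (hdisj : Pairwise (Disjoint on Vs)) (hΔpos : 0 < Δ)
    (hΔ : G.maxDegree ≤ Δ) (hsize : ∀ i, 4 * Δ ≤ #(Vs i)) :
    ∃ ω : ι → V, (∀ i, ω i ∈ Vs i) ∧ ∀ i j, ¬ G.Adj (ω i) (ω j) := by
  choose d _ using fun i => card_pos.1 <| (Nat.mul_pos (by norm_num) hΔpos).trans_le (hsize i)
  obtain ⟨ω, hω⟩ := card_pos.1 <|
    card_indepTransversalsOn_pos (G := G) (d := d) hdisj hΔpos hΔ hsize univ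
  exact ⟨ω, by simpa using hω⟩

end SimpleGraph

lemma image_univ_inter_eq_singleton {ι V : Type*} [Fintype ι] [DecidableEq V] {Vs : ι → Finset V}
    (hdisj : Pairwise (Disjoint on Vs)) {ω : ι → V} (hω : ∀ i, ω i ∈ Vs i) (i : ι) :
    univ.image ω ∩ Vs i = {ω i} := by
  ext v
  simp only [mem_inter, mem_image, mem_univ, true_and, mem_singleton]
  constructor
  · rintro ⟨⟨k, rfl⟩, hk⟩
    obtain rfl : k = i := by_contra fun hki => disjoint_left.1 (hdisj hki) (hω k) hk
    rfl
  · rintro rfl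
    exact ⟨⟨i, rfl⟩, hω i⟩

theorem independent_transversal_general {V : Type*} [Fintype V] [DecidableEq V]
    (G : SimpleGraph V) [DecidableRel G.Adj]
    (Δ : ℕ) (hΔpos : 1 ≤ Δ) (hΔ : G.maxDegree ≤ Δ)
    (n : ℕ) (Vs : Fin n → Finset V)
    (hdisj : ∀ i j, i ≠ j → Disjoint (Vs i) (Vs j))
    (hsize : ∀ i, 4 * Δ ≤ (Vs i).card) :
    ∃ W : Finset V, W.card = n ∧ (∀ i, (W ∩ Vs i).card = 1) ∧
      (∀ a ∈ W, ∀ b ∈ W, ¬ G.Adj a b) := by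
  have hpairwise : Pairwise (Disjoint on Vs) := fun i j => hdisj i j
  obtain ⟨ω, hω, hind⟩ := G.exists_indep_transversal hpairwise hΔpos hΔ hsize
  have hinj : Injective ω := fun i j hij =>
    by_contra fun hne => disjoint_left.1 (hpairwise hne) (hω i) (hij ▸ hω j)
  refine ⟨univ.image ω, ?_, fun i => ?_, ?_⟩
  · rw [card_image_of_injective _ hinj, card_univ, Fintype.card_fin]
  · rw [image_univ_inter_eq_singleton hpairwise hω i, card_singleton]
  · simp only [mem_image, mem_univ, true_and]
    rintro _ ⟨i, rfl⟩ _ ⟨j, rfl⟩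
    exact hind i j

theorem independent_transversal {V : Type*} [Fintype V] [DecidableEq V]
    (G : SimpleGraph V) [DecidableRel G.Adj]
    (Δ : ℕ) (hΔpos : 1 ≤ Δ) (hΔ : G.maxDegree ≤ Δ)
    (n : ℕ) (Vs : Fin n → Finset V)
    (hdisj : ∀ i j, i ≠ j → Disjoint (Vs i) (Vs j))
    (hcover : ∀ v : V, ∃ i, v ∈ Vs i)
    (hsize : ∀ i, 4 * Δ ≤ (Vs i).card) :
    ∃ W : Finset V, W.card = n ∧ (∀ i, (W ∩ Vs i).card = 1) ∧
      (∀ a ∈ W, ∀ b ∈ W, ¬ G.Adj a b) :=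
  independent_transversal_general G Δ hΔpos hΔ n Vs hdisj hsize
end

section
/- Let A be an n×n matrix with integer entries such that no integer appears in more than k entries of A, where k ≤ 27(n-1)/256. Then A has a Latin transversal, i.e., there exists a permutation σ of {1,…,n} such that the entries a_{1σ(1)}, …, a_{nσ(n)} are pairwise distinct. -/
/-!
Call two cells in different rows and columns holding equal entries a bad pair; a permutation is a
Latin transversal iff it passes through both cells of no bad pair. For a set `L` of lines (rows
and columns) let `N(L)` count the permutations avoiding every bad pair that meets no line of `L`;
then `N(all lines) = n!`. A lopsided local lemma argument shows, by downward induction on `L`,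
that `3 N(L ∪ {ℓ}) ≤ 4 N(L)`. Indeed, at most `nk` bad pairs meet `ℓ`. A bad pair `e` is hit by
at most a `1/(n(n-1))` fraction of the permutations avoiding the bad pairs disjoint from
`L ∪ lines e`, since moving the two entries of `e` to any other two columns is injective; and by
induction, adding the at most three remaining lines of `e` to `L ∪ {ℓ}` costs at most `(4/3)^3`.
As `k ≤ (3/4)^3 (n-1) / 4`, the union bound gives `N(L ∪ {ℓ}) ≤ N(L) + N(L ∪ {ℓ}) / 4`.
Iterating over all `2n` lines, `N(∅) ≥ (3/4)^(2n) n! > 0`.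
-/

open Finset Equiv
open scoped Classical BigOperators

section Avoiding

variable {Ω ι : Type*} [Fintype Ω] (P : Ω → ι → Prop)

noncomputable def avoiding (S : Finset ι) : Finset Ω := {ω | ∀ e ∈ S, ¬ P ω e}

variable {P}

theorem mem_avoiding {S : Finset ι} {ω : Ω} : ω ∈ avoiding P S ↔ ∀ e ∈ S, ¬ P ω e := by
  simp [avoiding]

@[simp]
theorem avoiding_empty : avoiding P (∅ : Finset ι) = univ := by
  ext; simp [mem_avoiding]

theorem avoiding_anti {S T : Finset ι} (h : S ⊆ T) : avoiding P T ⊆ avoiding P S :=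
  fun _ hω => mem_avoiding.2 fun e he => mem_avoiding.1 hω e (h he)

theorem card_avoiding_le_add_sum [DecidableEq ι] (S T : Finset ι) :
    #(avoiding P S) ≤ #(avoiding P T) + ∑ e ∈ T \ S, #{ω ∈ avoiding P S | P ω e} := by
  calc #(avoiding P S)
      ≤ #(avoiding P T ∪ (T \ S).biUnion fun e => {ω ∈ avoiding P S | P ω e}) := by
        refine card_le_card fun ω hω => ?_
        by_cases hT : ω ∈ avoiding P T
        · exact mem_union_left _ hT
        · obtain ⟨e, heT, he⟩ : ∃ e ∈ T, P ω e := by simpa [mem_avoiding] using hT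
          have heS : e ∉ S := fun heS => mem_avoiding.1 hω e heS he
          exact mem_union_right _ (mem_biUnion.2 ⟨e, mem_sdiff.2 ⟨heT, heS⟩, mem_filter.2 ⟨hω, he⟩⟩)
    _ ≤ _ := (card_union_le _ _).trans (Nat.add_le_add_left card_biUnion_le _)

end Avoiding

theorem three_mul_le_four_mul_of_le_add_sum {ι : Type*} {D : Finset ι} {h : ι → ℕ} {N N' b : ℕ}
    (hle : N' ≤ N + ∑ e ∈ D, h e) (hD : #D ≤ b) (hh : ∀ e ∈ D, 4 * b * h e ≤ N') :
    3 * N' ≤ 4 * N := by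
  have hsum : b * (4 * ∑ e ∈ D, h e) ≤ b * N' :=
    calc b * (4 * ∑ e ∈ D, h e) = ∑ e ∈ D, 4 * b * h e := by rw [mul_sum, mul_sum]; ring_nf
      _ ≤ ∑ _e ∈ D, N' := sum_le_sum hh
      _ = #D * N' := by rw [sum_const, smul_eq_mul]
      _ ≤ b * N' := Nat.mul_le_mul_right _ hD
  rcases Nat.eq_zero_or_pos b with rfl | hb
  · rw [card_eq_zero.1 (Nat.le_zero.1 hD), sum_empty] at hle
    omega
  · have := Nat.le_of_mul_le_mul_left hsum hb
    omega

theorem pow_mul_le_pow_mul_of_card_le {γ : Type*} [DecidableEq γ] (f : Finset γ → ℕ)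
    {a b : ℕ} (hab : a ≤ b) {L₀ : Finset γ} (h : ∀ L, L₀ ⊆ L → ∀ x, a * f (insert x L) ≤ b * f L)
    {F : Finset γ} {m : ℕ} (hF : #F ≤ m) : a ^ m * f (L₀ ∪ F) ≤ b ^ m * f L₀ := by
  induction F using Finset.induction_on generalizing m with
  | empty => simpa using Nat.mul_le_mul_right _ (Nat.pow_le_pow_left hab m)
  | insert x F hx ih =>
    obtain ⟨m, rfl⟩ : ∃ m', m = m' + 1 :=
      Nat.exists_eq_add_one.2 (by rw [card_insert_of_notMem hx] at hF; omega)
    rw [card_insert_of_notMem hx] at hF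
    calc a ^ (m + 1) * f (L₀ ∪ insert x F) = a ^ m * (a * f (insert x (L₀ ∪ F))) := by
          rw [union_insert]; ring
      _ ≤ a ^ m * (b * f (L₀ ∪ F)) := Nat.mul_le_mul_left _ (h _ subset_union_left x)
      _ = b * (a ^ m * f (L₀ ∪ F)) := by ring
      _ ≤ b * (b ^ m * f L₀) := Nat.mul_le_mul_left _ (ih (by omega))
      _ = b ^ (m + 1) * f L₀ := by ring

section Perm

variable {α : Type*} [DecidableEq α]

def Hits (σ : Perm α) (e : (α × α) × (α × α)) : Prop := σ e.1.1 = e.1.2 ∧ σ e.2.1 = e.2.2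

def lines (e : (α × α) × (α × α)) : Finset (α ⊕ α) :=
  {.inl e.1.1, .inl e.2.1, .inr e.1.2, .inr e.2.2}

theorem lines_nonempty (e : (α × α) × (α × α)) : (lines e).Nonempty := insert_nonempty _ _

def moveTwo (c c' d d' : α) : Perm α := (swap c d).trans (swap (swap c d c') d')

variable {c c' d d' : α}

theorem moveTwo_apply_left (hc : c ≠ c') (hd : d ≠ d') : moveTwo c c' d d' c = d := by
  rw [moveTwo, trans_apply, swap_apply_left]
  exact swap_apply_of_ne_of_ne
    (fun h => hc ((swap c d).injective (by rw [swap_apply_left]; exact h))) hd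

theorem moveTwo_apply_right : moveTwo c c' d d' c' = d' := by
  rw [moveTwo, trans_apply, swap_apply_left]

theorem moveTwo_apply_of_ne {b : α} (hc : b ≠ c) (hc' : b ≠ c') (hd : b ≠ d) (hd' : b ≠ d') :
    moveTwo c c' d d' b = b := by
  have hb : swap c d b = b := swap_apply_of_ne_of_ne hc hd
  rw [moveTwo, trans_apply, hb]
  refine swap_apply_of_ne_of_ne ?_ hd'
  rw [← hb]
  exact (swap c d).injective.ne hc'

theorem apply_eq_of_moveTwo_apply_eq {σ : Perm α} {i j : α} (hσ : Hits σ ((i, c), (j, c')))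
    (hc : c ≠ c') (hd : d ≠ d') {a b : α} (hi : a ≠ i) (hj : a ≠ j) (hbc : b ≠ c) (hbc' : b ≠ c')
    (h : moveTwo c c' d d' (σ a) = b) : σ a = b := by
  by_cases hbd : b = d
  · subst hbd
    have : σ a = c := (moveTwo c c' b d').injective (h.trans (moveTwo_apply_left hc hd).symm)
    exact absurd (σ.injective (this.trans hσ.1.symm)) hi
  by_cases hbd' : b = d'
  · subst hbd'
    have : σ a = c' := (moveTwo c c' d b).injective (h.trans moveTwo_apply_right.symm)
    exact absurd (σ.injective (this.trans hσ.2.symm)) hj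
  exact (moveTwo c c' d d').injective (h.trans (moveTwo_apply_of_ne hbc hbc' hbd hbd').symm)

theorem Hits.of_trans_moveTwo {σ : Perm α} {i j : α} (hσ : Hits σ ((i, c), (j, c')))
    (hc : c ≠ c') (hd : d ≠ d') {f : (α × α) × (α × α)}
    (hf : Disjoint (lines ((i, c), (j, c'))) (lines f))
    (h : Hits (σ.trans (moveTwo c c' d d')) f) : Hits σ f := by
  simp only [lines, disjoint_left, mem_insert, mem_singleton, not_or, forall_eq_or_imp,
    Sum.inl.injEq, Sum.inr.injEq, reduceCtorEq, not_false_eq_true, and_self, and_true, true_and,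
    forall_eq] at hf
  obtain ⟨⟨hi, hi'⟩, ⟨hj, hj'⟩, ⟨hc₁, hc₂⟩, hc'₁, hc'₂⟩ := hf
  exact ⟨apply_eq_of_moveTwo_apply_eq hσ hc hd (Ne.symm hi) (Ne.symm hj) (Ne.symm hc₁)
      (Ne.symm hc'₁) h.1,
    apply_eq_of_moveTwo_apply_eq hσ hc hd (Ne.symm hi') (Ne.symm hj') (Ne.symm hc₂)
      (Ne.symm hc'₂) h.2⟩

theorem card_mul_card_filter_hits_le [Fintype α] {S : Finset ((α × α) × (α × α))}
    {e : (α × α) × (α × α)} (hc : e.1.2 ≠ e.2.2) (hS : ∀ f ∈ S, Disjoint (lines e) (lines f)) :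
    Fintype.card α * (Fintype.card α - 1) * #{σ ∈ avoiding Hits S | Hits σ e} ≤
      #(avoiding Hits S) := by
  obtain ⟨⟨i, c⟩, j, c'⟩ := e
  set H := {σ ∈ avoiding Hits S | Hits σ ((i, c), (j, c'))}
  have hmaps : ∀ q ∈ H ×ˢ (univ : Finset α).offDiag,
      q.1.trans (moveTwo c c' q.2.1 q.2.2) ∈ avoiding Hits S := by
    rintro ⟨σ, d, d'⟩ hq
    simp only [H, mem_product, mem_filter, mem_offDiag] at hq
    obtain ⟨⟨hσ, hits⟩, -, -, hd⟩ := hq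
    exact mem_avoiding.2 fun f hf hf' =>
      mem_avoiding.1 hσ f hf (hits.of_trans_moveTwo hc hd (hS f hf) hf')
  have hinj : Set.InjOn (fun q : Perm α × α × α => q.1.trans (moveTwo c c' q.2.1 q.2.2))
      (H ×ˢ (univ : Finset α).offDiag : Finset _) := by
    rintro ⟨σ₁, d₁, d₁'⟩ hq₁ ⟨σ₂, d₂, d₂'⟩ hq₂ heq
    simp only [H, coe_product, Set.mem_prod, mem_coe, mem_filter, mem_offDiag] at hq₁ hq₂
    obtain ⟨⟨-, hi₁, hj₁⟩, -, -, hd₁⟩ := hq₁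
    obtain ⟨⟨-, hi₂, hj₂⟩, -, -, hd₂⟩ := hq₂
    have hi := congrArg (· i) heq
    have hj := congrArg (· j) heq
    simp only [trans_apply] at hi hj
    rw [hi₁, hi₂, moveTwo_apply_left hc hd₁, moveTwo_apply_left hc hd₂] at hi
    rw [hj₁, hj₂, moveTwo_apply_right, moveTwo_apply_right] at hj
    subst hi hj
    simp only [Prod.mk.injEq, and_true]
    exact Equiv.ext fun x => (moveTwo c c' d₁ d₁').injective (congrArg (· x) heq)
  have hcard := card_le_card_of_injOn _ hmaps hinj
  rwa [card_product, offDiag_card, card_univ, ← Nat.mul_sub_one, mul_comm] at hcard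

end Perm

section Transversal

variable {α β : Type*} [Fintype α] [LinearOrder α] (A : α → α → β)

-- Ordering the rows makes each unordered pair of equal cells a single event.
def IsBadPair (e : (α × α) × (α × α)) : Prop :=
  e.1.1 < e.2.1 ∧ e.1.2 ≠ e.2.2 ∧ A e.1.1 e.1.2 = A e.2.1 e.2.2

noncomputable def badPairsAvoiding (L : Finset (α ⊕ α)) : Finset ((α × α) × (α × α)) :=
  {e | IsBadPair A e ∧ Disjoint (lines e) L}

noncomputable def numPermsAvoiding (L : Finset (α ⊕ α)) : ℕ :=
  #(avoiding Hits (badPairsAvoiding A L))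

theorem badPairsAvoiding_anti {L L' : Finset (α ⊕ α)} (h : L ⊆ L') :
    badPairsAvoiding A L' ⊆ badPairsAvoiding A L := by
  intro e he
  simp only [badPairsAvoiding, mem_filter, mem_univ, true_and] at he ⊢
  exact ⟨he.1, he.2.mono_right h⟩

theorem badPairsAvoiding_univ : badPairsAvoiding A univ = ∅ :=
  filter_eq_empty_iff.2 fun e _ he =>
    disjoint_left.1 he.2 (lines_nonempty e).choose_spec (mem_univ _)

theorem mem_badPairsAvoiding_sdiff_insert {L : Finset (α ⊕ α)} {ℓ : α ⊕ α}
    {e : (α × α) × (α × α)} (he : e ∈ badPairsAvoiding A L \ badPairsAvoiding A (insert ℓ L)) :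
    IsBadPair A e ∧ ℓ ∈ lines e := by
  simp only [badPairsAvoiding, mem_sdiff, mem_filter, mem_univ, true_and,
    disjoint_insert_right, not_and] at he
  exact ⟨he.1.1, not_not.1 fun h => he.2 he.1.1 h he.1.2⟩

def lineCell : α ⊕ α → α → α × α := Sum.elim (fun i t => (i, t)) (fun c t => (t, c))

theorem mem_lines_iff {ℓ : α ⊕ α} {e : (α × α) × (α × α)} :
    ℓ ∈ lines e ↔ e.1 ∈ univ.image (lineCell ℓ) ∨ e.2 ∈ univ.image (lineCell ℓ) := by
  rcases ℓ with i | c <;> simp [lines, lineCell, Prod.ext_iff, eq_comm]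

theorem card_filter_isBadPair_mem_lines_le [DecidableEq β] {k : ℕ}
    (hmult : ∀ z : β, ((univ : Finset (α × α)).filter (fun q => A q.1 q.2 = z)).card ≤ k)
    (ℓ : α ⊕ α) : #{e | IsBadPair A e ∧ ℓ ∈ lines e} ≤ Fintype.card α * k := by
  set cells := univ.image (lineCell ℓ)
  set T := {pq ∈ cells ×ˢ (univ : Finset (α × α)) | A pq.1.1 pq.1.2 = A pq.2.1 pq.2.2}
  have hfiber : ∀ p ∈ cells, #{pq ∈ T | pq.1 = p} ≤ k := fun p _ =>
    (card_le_card_of_injOn Prod.snd (t := {q : α × α | A q.1 q.2 = A p.1 p.2})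
      (fun pq hpq => by
        rw [mem_coe, mem_filter, mem_filter] at hpq
        rw [mem_coe, mem_filter, ← hpq.2]
        exact ⟨mem_univ _, hpq.1.2.symm⟩)
      (fun pq hpq pq' hpq' h => Prod.ext
        ((mem_filter.1 hpq).2.trans (mem_filter.1 hpq').2.symm) h)).trans (hmult _)
  have hT : #T ≤ Fintype.card α * k :=
    calc #T ≤ k * #cells := card_le_mul_card_image_of_maps_to
          (fun pq hpq => (mem_product.1 (mem_filter.1 hpq).1).1) k hfiber
      _ ≤ k * Fintype.card α := Nat.mul_le_mul_left _ card_image_le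
      _ = Fintype.card α * k := mul_comm _ _
  refine (card_le_card_of_injOn (fun e => if e.1 ∈ cells then e else e.swap) ?_ ?_).trans hT
  · intro e he
    obtain ⟨hbad, hℓ⟩ := (mem_filter.1 he).2
    dsimp only
    split_ifs with h₁
    · exact mem_filter.2 ⟨mem_product.2 ⟨h₁, mem_univ _⟩, hbad.2.2⟩
    · have h₂ := (mem_lines_iff.1 hℓ).resolve_left h₁
      exact mem_filter.2 ⟨mem_product.2 ⟨h₂, mem_univ _⟩, hbad.2.2.symm⟩
  · intro e he e' he' h
    have hlt := (mem_filter.1 he).2.1.1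
    have hlt' := (mem_filter.1 he').2.1.1
    dsimp only at h
    split_ifs at h
    · exact h
    · subst h; exact absurd (hlt.trans hlt') (lt_irrefl _)
    · subst h; exact absurd (hlt.trans hlt') (lt_irrefl _)
    · exact Prod.swap_injective h

theorem four_mul_card_filter_hits_le {k : ℕ} (hk : 256 * k ≤ 27 * (Fintype.card α - 1))
    {L : Finset (α ⊕ α)} {e : (α × α) × (α × α)} (hbad : IsBadPair A e)
    (hgrowth : 27 * numPermsAvoiding A (L ∪ lines e) ≤ 64 * numPermsAvoiding A L) :
    4 * (Fintype.card α * k) * #{σ ∈ avoiding Hits (badPairsAvoiding A L) | Hits σ e} ≤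
      numPermsAvoiding A L := by
  set n := Fintype.card α
  set H := #{σ ∈ avoiding Hits (badPairsAvoiding A L) | Hits σ e}
  have hswap : n * (n - 1) * H ≤ numPermsAvoiding A (L ∪ lines e) :=
    (Nat.mul_le_mul_left _ (card_le_card (filter_subset_filter _
      (avoiding_anti (badPairsAvoiding_anti A subset_union_left))))).trans
      (card_mul_card_filter_hits_le hbad.2.1 fun f hf =>
        ((mem_filter.1 hf).2.2.mono_right subset_union_right).symm)
  refine Nat.le_of_mul_le_mul_left ?_ (by norm_num : 0 < 64)
  calc 64 * (4 * (n * k) * H) = n * (256 * k) * H := by ring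
    _ ≤ n * (27 * (n - 1)) * H := by gcongr
    _ = 27 * (n * (n - 1) * H) := by ring
    _ ≤ 27 * numPermsAvoiding A (L ∪ lines e) := Nat.mul_le_mul_left _ hswap
    _ ≤ 64 * numPermsAvoiding A L := hgrowth

theorem three_mul_numPermsAvoiding_insert_le [DecidableEq β] {k : ℕ}
    (hmult : ∀ z : β, ((univ : Finset (α × α)).filter (fun q => A q.1 q.2 = z)).card ≤ k)
    (hk : 256 * k ≤ 27 * (Fintype.card α - 1)) (L : Finset (α ⊕ α)) (ℓ : α ⊕ α) :
    3 * numPermsAvoiding A (insert ℓ L) ≤ 4 * numPermsAvoiding A L := by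
  revert ℓ
  refine strongDownwardInductionOn (p := fun L => ∀ ℓ,
    3 * numPermsAvoiding A (insert ℓ L) ≤ 4 * numPermsAvoiding A L) L (fun L ih _ ℓ => ?_)
    (card_le_univ L)
  by_cases hℓ : ℓ ∈ L
  · rw [insert_eq_of_mem hℓ]; omega
  have hgrowth : ∀ F : Finset (α ⊕ α), #F ≤ 3 →
      27 * numPermsAvoiding A (insert ℓ L ∪ F) ≤ 64 * numPermsAvoiding A (insert ℓ L) :=
    fun F hF => pow_mul_le_pow_mul_of_card_le (numPermsAvoiding A) (by norm_num)
      (fun _ h => ih (card_le_univ _) ((ssubset_insert hℓ).trans_subset h)) hF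
  refine three_mul_le_four_mul_of_le_add_sum (b := Fintype.card α * k)
    (card_avoiding_le_add_sum (badPairsAvoiding A (insert ℓ L)) (badPairsAvoiding A L))
    ((card_le_card fun e he => ?_).trans (card_filter_isBadPair_mem_lines_le A hmult ℓ))
    fun e he => ?_
  · exact mem_filter.2 ⟨mem_univ _, mem_badPairsAvoiding_sdiff_insert A he⟩
  obtain ⟨hbad, hℓe⟩ := mem_badPairsAvoiding_sdiff_insert A he
  refine four_mul_card_filter_hits_le A hk hbad ?_
  rw [← union_erase_of_mem (mem_insert_self ℓ L)]
  refine hgrowth _ ?_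
  rw [card_erase_of_mem hℓe]
  exact Nat.sub_le_sub_right card_le_four 1

theorem nonempty_avoiding_badPairsAvoiding_empty [DecidableEq β] {k : ℕ}
    (hmult : ∀ z : β, ((univ : Finset (α × α)).filter (fun q => A q.1 q.2 = z)).card ≤ k)
    (hk : 256 * k ≤ 27 * (Fintype.card α - 1)) :
    (avoiding Hits (badPairsAvoiding A ∅)).Nonempty := by
  have h := pow_mul_le_pow_mul_of_card_le (numPermsAvoiding A) (by norm_num : 3 ≤ 4) (L₀ := ∅)
    (fun L _ ℓ => three_mul_numPermsAvoiding_insert_le A hmult hk L ℓ)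
    (le_refl #(univ : Finset (α ⊕ α)))
  rw [empty_union, numPermsAvoiding, badPairsAvoiding_univ, avoiding_empty] at h
  rw [← card_pos]
  have : 0 < 3 ^ #(univ : Finset (α ⊕ α)) * #(univ : Finset (Perm α)) :=
    Nat.mul_pos (by positivity) (card_pos.2 univ_nonempty)
  exact Nat.pos_of_mul_pos_left (this.trans_le h)

theorem injective_of_mem_avoiding_badPairsAvoiding_empty {σ : Perm α}
    (hσ : σ ∈ avoiding Hits (badPairsAvoiding A ∅)) : Function.Injective fun i => A i (σ i) :=
  Function.Injective.of_lt_imp_ne fun i j hij heq => mem_avoiding.1 hσ ((i, σ i), (j, σ j))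
    (mem_filter.2 ⟨mem_univ _, ⟨hij, σ.injective.ne hij.ne, heq⟩, disjoint_empty_right _⟩)
    ⟨rfl, rfl⟩

end Transversal

theorem latin_transversal (n k : ℕ) (A : Fin n → Fin n → ℤ)
    (hmult : ∀ z : ℤ,
      ((Finset.univ : Finset (Fin n × Fin n)).filter (fun q => A q.1 q.2 = z)).card ≤ k)
    (hk : (k : ℝ) ≤ 27 * ((n : ℝ) - 1) / 256) :
    ∃ σ : Equiv.Perm (Fin n), Function.Injective (fun i => A i (σ i)) := by
  have hk' : 256 * k ≤ 27 * (Fintype.card (Fin n) - 1) := by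
    rcases n with _ | n
    · have : (0 : ℝ) ≤ k := k.cast_nonneg
      linarith
    · rw [Fintype.card_fin, Nat.add_sub_cancel]
      push_cast at hk
      exact_mod_cast (by linarith : (256 * k : ℝ) ≤ 27 * n)
  obtain ⟨σ, hσ⟩ := nonempty_avoiding_badPairsAvoiding_empty A hmult hk'
  exact ⟨σ, injective_of_mem_avoiding_badPairsAvoiding_empty A hσ⟩
end
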